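/- arXiv:2311.00345 — 3 statements merged into one kernel-verified Lean document; each statement's English description precedes it below -/
import Mathlib

section
/- A Hausdorff topological group G is ω-balanced and feathered if and only if for each open neighborhood O of the identity in G there is a compact invariant (normal) subgroup H such that H ⊆ O and the quotient space G/H is metrizable. -/
open Filter Topology Set Pointwise TopologicalSpace

universe u

section Defs

variable {X : Type*}

/-- A subset `s` of a topological space is countably compact (in the ambient space) if every
countable open cover of `s` (indexed by `ℕ`) has a finite subcover. -/
def IsCountablyCompactIn [TopologicalSpace X] (s : Set X) : Prop :=
  ∀ U : ℕ → Set X, (∀ n, IsOpen (U n)) → s ⊆ ⋃ n, U n → ∃ t : Finset ℕ, s ⊆ ⋃ n ∈ t, U n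

/-- `U` is a q-sequence at `x`: a sequence of open neighbourhoods of `x` such that every
sequence of points chosen from the `U n` has an accumulation (cluster) point in `X`. -/
def IsQSequenceAt [TopologicalSpace X] (x : X) (U : ℕ → Set X) : Prop :=
  (∀ n, IsOpen (U n) ∧ x ∈ U n) ∧
    ∀ u : ℕ → X, (∀ n, u n ∈ U n) → ∃ p : X, MapClusterPt p Filter.atTop u

/-- A space is a q-space if every point has a q-sequence. -/
def QSpace (X : Type*) [TopologicalSpace X] : Prop :=
  ∀ x : X, ∃ U : ℕ → Set X, IsQSequenceAt x U

/-- A space is a strict q-space if every point has a q-sequence whose intersection is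
sequentially compact. -/
def StrictQSpace (X : Type*) [TopologicalSpace X] : Prop :=
  ∀ x : X, ∃ U : ℕ → Set X, IsQSequenceAt x U ∧ IsSeqCompact (⋂ n, U n)

/-- `U` is a strong q-sequence at `x`: a sequence of open neighbourhoods of `x` such that every
sequence of points chosen from the `U n` has a convergent subsequence. -/
def IsStrongQSequenceAt [TopologicalSpace X] (x : X) (U : ℕ → Set X) : Prop :=
  (∀ n, IsOpen (U n) ∧ x ∈ U n) ∧
    ∀ u : ℕ → X, (∀ n, u n ∈ U n) →
      ∃ (p : X) (φ : ℕ → ℕ), StrictMono φ ∧ Filter.Tendsto (u ∘ φ) Filter.atTop (nhds p)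

/-- A space is a strong q-space if every point has a strong q-sequence. -/
def StrongQSpace (X : Type*) [TopologicalSpace X] : Prop :=
  ∀ x : X, ∃ U : ℕ → Set X, IsStrongQSequenceAt x U

/-- A subset `A` is of countable character in `X` if there is a countable family of open
neighbourhoods of `A` such that every open neighbourhood of `A` contains a member of it. -/
def HasCountableCharacter [TopologicalSpace X] (A : Set X) : Prop :=
  ∃ U : ℕ → Set X, (∀ n, IsOpen (U n) ∧ A ⊆ U n) ∧
    ∀ W : Set X, IsOpen W → A ⊆ W → ∃ n, U n ⊆ W

/-- A topological group is ω-balanced if for every neighbourhood `U` of the identity there is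
a countable family `γ` of open neighbourhoods of the identity such that for every `x` some
`V ∈ γ` satisfies `xVx⁻¹ ⊆ U`. -/
def OmegaBalanced (G : Type*) [Group G] [TopologicalSpace G] : Prop :=
  ∀ U : Set G, U ∈ nhds (1 : G) → ∃ γ : Set (Set G), γ.Countable ∧
    (∀ V ∈ γ, IsOpen V ∧ (1 : G) ∈ V) ∧
    ∀ x : G, ∃ V ∈ γ, ∀ v ∈ V, x * v * x⁻¹ ∈ U

/-- A topological group is ω-narrow if for every open neighbourhood `V` of the identity there
is a countable set `A` with `A * V = G`. -/
def OmegaNarrow (G : Type*) [Group G] [TopologicalSpace G] : Prop :=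
  ∀ V : Set G, IsOpen V → (1 : G) ∈ V → ∃ A : Set G, A.Countable ∧ A * V = Set.univ

/-- A topological group is feathered if it has a nonempty compact subset of countable
character. -/
def IsFeathered (G : Type*) [Group G] [TopologicalSpace G] : Prop :=
  ∃ K : Set G, K.Nonempty ∧ IsCompact K ∧ HasCountableCharacter K

/-- A subgroup `H` of a topological group is neutral if for every open neighbourhood `U` of the
identity there is an open neighbourhood `V` of the identity with `HV ⊆ UH`. -/
def IsNeutralSubgroup {G : Type*} [Group G] [TopologicalSpace G] (H : Subgroup G) : Prop :=
  ∀ U : Set G, IsOpen U → (1 : G) ∈ U →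
    ∃ V : Set G, IsOpen V ∧ (1 : G) ∈ V ∧ (H : Set G) * V ⊆ U * (H : Set G)

end Defs

/-!
If `G ⧸ H` is metrizable with `H` compact, the preimages of a countable base at the identity of
`G ⧸ H` form a countable base of neighbourhoods of `H`. Taking `O = G` shows that `G` is
feathered. For `H ⊆ O` normal and any `x`, the open set `{g | x g x⁻¹ ∈ O}` contains `H`, hence
one of these countably many neighbourhoods: this is ω-balancedness.

Conversely, let `K ∋ 1` be compact of countable character. Closing a countable base of
`𝓝ˢ K ⊓ 𝓟 O` under square roots, inverses and the conjugation witnesses of ω-balancedness yields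
a countably generated filter `F` which is the neighbourhood filter of `1` for a coarser group
topology invariant under inner automorphisms. Its kernel `H` is a closed normal subgroup of
`K ∩ O`, and compactness of `K` gives `𝓝ˢ H = 𝓝ˢ K ⊓ F`. Hence `H` has countable character, so
`G ⧸ H` is a first countable Hausdorff group, hence metrizable.
-/

theorem Set.Countable.exists_superset_stable {α : Type*} {p S₀ : Set α} (step : α → Set α)
    (hstep : ∀ a ∈ p, (step a).Countable ∧ step a ⊆ p) (hS₀ : S₀.Countable) (hS₀p : S₀ ⊆ p) :
    ∃ S : Set α, S.Countable ∧ S₀ ⊆ S ∧ S ⊆ p ∧ ∀ a ∈ S, step a ⊆ S := by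
  let T : ℕ → Set α := fun n => (fun S => S ∪ ⋃ a ∈ S, step a)^[n] S₀
  have hT_succ (n : ℕ) : T (n + 1) = T n ∪ ⋃ a ∈ T n, step a :=
    Function.iterate_succ_apply' _ n S₀
  have hT (n : ℕ) : (T n).Countable ∧ T n ⊆ p := by
    induction n with
    | zero => exact ⟨hS₀, hS₀p⟩
    | succ n ih =>
      rw [hT_succ]
      exact ⟨ih.1.union (ih.1.biUnion fun a ha => (hstep a (ih.2 ha)).1),
        union_subset ih.2 (iUnion₂_subset fun a ha => (hstep a (ih.2 ha)).2)⟩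
  refine ⟨⋃ n, T n, countable_iUnion fun n => (hT n).1, subset_iUnion T 0,
    iUnion_subset fun n => (hT n).2, fun a ha => ?_⟩
  obtain ⟨n, hn⟩ := mem_iUnion.1 ha
  refine subset_trans ?_ (subset_iUnion T (n + 1))
  rw [hT_succ]
  exact subset_union_of_subset_right (subset_biUnion_of_mem (u := step) hn) _

section Topology

variable {X : Type*} [TopologicalSpace X]

theorem hasCountableCharacter_iff {A : Set X} :
    HasCountableCharacter A ↔ (𝓝ˢ A).IsCountablyGenerated := by
  constructor
  · rintro ⟨U, hU, hcofinal⟩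
    refine HasBasis.isCountablyGenerated (p := fun _ : ℕ => True) (s := U) <|
      (hasBasis_nhdsSet A).to_hasBasis (fun W hW => ?_) fun n _ => ⟨U n, hU n, subset_rfl⟩
    obtain ⟨n, hn⟩ := hcofinal W hW.1 hW.2
    exact ⟨n, trivial, hn⟩
  · intro _
    obtain ⟨U, hU, hbasis⟩ := (hasBasis_nhdsSet A).exists_antitone_subbasis
    exact ⟨U, hU, fun W hWo hAW => hbasis.mem_iff.1 (hWo.mem_nhdsSet.2 hAW)⟩

theorem IsCompact.nhdsSet_ker_eq_inf {K : Set X} (hK : IsCompact K) {F : Filter X}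
    (hFK : F.ker ⊆ K) (hcluster : ∀ x, ClusterPt x F → x ∈ F.ker) (hle : 𝓝ˢ F.ker ≤ F) :
    𝓝ˢ F.ker = 𝓝ˢ K ⊓ F := by
  refine le_antisymm (le_inf (nhdsSet_mono hFK) hle) ((hasBasis_nhdsSet _).ge_iff.2 ?_)
  rintro W ⟨hWo, hW⟩
  by_contra hWF
  rw [notMem_iff_inf_principal_compl, inf_assoc, hK.nhdsSet_inf_eq_biSup] at hWF
  simp only [iSup_neBot] at hWF
  obtain ⟨x, -, hx⟩ := hWF
  have hxW : x ∈ W := hW (hcluster x (ClusterPt.mono hx inf_le_left))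
  have hxWc : x ∈ closure Wᶜ := mem_closure_iff_clusterPt.2 (ClusterPt.mono hx inf_le_right)
  rw [hWo.isClosed_compl.closure_eq] at hxWc
  exact hxWc hxW

end Topology

section Group

variable {G : Type*} [Group G] [TopologicalSpace G]

/-- `F` is the filter of neighbourhoods of `1` for a group topology on `G` that is coarser than the
given one and invariant under inner automorphisms. -/
structure IsInvariantGroupFilter (F : Filter G) : Prop where
  nhds_le : 𝓝 1 ≤ F
  mul_le : F * F ≤ F
  inv_le : F⁻¹ ≤ F
  tendsto_conj : ∀ x : G, Tendsto (fun g => x * g * x⁻¹) F F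

namespace IsInvariantGroupFilter

variable {F : Filter G} (hF : IsInvariantGroupFilter F)
include hF

theorem exists_mul_subset {V : Set G} (hV : V ∈ F) : ∃ s ∈ F, ∃ t ∈ F, s * t ⊆ V :=
  mem_mul.1 (hF.mul_le hV)

def kerSubgroup : Subgroup G where
  carrier := F.ker
  one_mem' := mem_ker.2 fun _ hV => mem_of_mem_nhds (hF.nhds_le hV)
  mul_mem' {a b} ha hb := mem_ker.2 fun V hV => by
    obtain ⟨s, hs, t, ht, hst⟩ := hF.exists_mul_subset hV
    exact hst (mul_mem_mul (mem_ker.1 ha s hs) (mem_ker.1 hb t ht))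
  inv_mem' ha := mem_ker.2 fun V hV => mem_ker.1 ha _ (hF.inv_le hV)

theorem kerSubgroup_normal : hF.kerSubgroup.Normal where
  conj_mem _ hn g := mem_ker.2 fun _ hV => mem_ker.1 hn _ (hF.tendsto_conj g hV)

variable [IsTopologicalGroup G]

theorem mem_ker_of_clusterPt {x : G} (hx : ClusterPt x F) : x ∈ F.ker := by
  refine mem_ker.2 fun V hV => ?_
  obtain ⟨s, hs, t, ht, hst⟩ := hF.exists_mul_subset hV
  have hnhds : (fun a => a⁻¹ * x) ⁻¹' t ∈ 𝓝 x :=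
    (continuous_inv.mul continuous_const).continuousAt.preimage_mem_nhds
      (by simpa using hF.nhds_le ht)
  obtain ⟨a, hat, has⟩ := clusterPt_iff_nonempty.1 hx hnhds hs
  simpa using hst (mul_mem_mul has hat)

theorem isClosed_ker : IsClosed F.ker :=
  isClosed_iff_clusterPt.2 fun _ hx =>
    hF.mem_ker_of_clusterPt (hx.mono fun V hV => mem_principal.2 (subset_ker.1 subset_rfl V hV))

theorem nhdsSet_ker_le : 𝓝ˢ F.ker ≤ F := by
  intro V hV
  obtain ⟨s, hs, t, ht, hst⟩ := hF.exists_mul_subset hV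
  refine mem_nhdsSet_iff_exists.2 ⟨s * interior t, isOpen_interior.mul_left, fun a ha => ?_,
    (mul_subset_mul_left interior_subset).trans hst⟩
  simpa using mul_mem_mul (mem_ker.1 ha s hs) (mem_interior_iff_mem_nhds.2 (hF.nhds_le ht))

end IsInvariantGroupFilter

variable [IsTopologicalGroup G]

theorem OmegaBalanced.exists_isInvariantGroupFilter_le (hb : OmegaBalanced G) {F₀ : Filter G}
    [F₀.IsCountablyGenerated] (h₀ : 𝓝 1 ≤ F₀) :
    ∃ F : Filter G, IsInvariantGroupFilter F ∧ F.IsCountablyGenerated ∧ F ≤ F₀ := by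
  obtain ⟨S₀, hS₀, rfl⟩ := IsCountablyGenerated.out (f := F₀)
  have hwitness : ∀ V ∈ 𝓝 (1 : G), ∃ T : Set (Set G), T.Countable ∧ T ⊆ (𝓝 (1 : G)).sets ∧
      V⁻¹ ∈ T ∧ (∃ W ∈ T, W * W ⊆ V) ∧ ∀ x, ∃ W ∈ T, W ⊆ (fun g => x * g * x⁻¹) ⁻¹' V := by
    intro V hV
    obtain ⟨W, hWo, hW1, hWV⟩ := exists_open_nhds_one_mul_subset hV
    obtain ⟨γ, hγc, hγo, hγ⟩ := hb V hV
    refine ⟨insert V⁻¹ (insert W γ), (hγc.insert W).insert _, ?_, mem_insert _ _,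
      ⟨W, mem_insert_of_mem _ (mem_insert _ _), hWV⟩, fun x => ?_⟩
    · rintro U (rfl | rfl | hU)
      exacts [inv_mem_nhds_one G hV, hWo.mem_nhds hW1, (hγo U hU).1.mem_nhds (hγo U hU).2]
    · obtain ⟨U, hU, hUV⟩ := hγ x
      exact ⟨U, mem_insert_of_mem _ (mem_insert_of_mem _ hU), hUV⟩
  choose! step hstep using hwitness
  obtain ⟨S, hS, hS₀S, hSnhds, hSstep⟩ := hS₀.exists_superset_stable step
    (fun V hV => ⟨(hstep V hV).1, (hstep V hV).2.1⟩) fun V hV => h₀ (mem_generate_of_mem hV)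
  have hmem {V W : Set G} (hV : V ∈ S) (hW : W ∈ step V) : W ∈ generate S :=
    mem_generate_of_mem (hSstep V hV hW)
  refine ⟨generate S, ⟨le_generate_iff.2 hSnhds, le_generate_iff.2 fun V hV => ?_,
    le_generate_iff.2 fun V hV => hmem hV (hstep V (hSnhds hV)).2.2.1,
    fun x => le_generate_iff.2 fun V hV => ?_⟩, ⟨⟨S, hS, rfl⟩⟩,
    le_generate_iff.2 fun V hV => mem_generate_of_mem (hS₀S hV)⟩
  · obtain ⟨W, hW, hWV⟩ := (hstep V (hSnhds hV)).2.2.2.1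
    exact mem_of_superset (mul_mem_mul (hmem hV hW) (hmem hV hW)) hWV
  · obtain ⟨W, hW, hWV⟩ := (hstep V (hSnhds hV)).2.2.2.2 x
    exact mem_map.2 (mem_of_superset (hmem hV hW) hWV)

theorem OmegaBalanced.exists_normal_compact_subgroup [T2Space G] (hb : OmegaBalanced G)
    {K : Set G} (hK : IsCompact K) (hK1 : (1 : G) ∈ K) [(𝓝ˢ K).IsCountablyGenerated]
    {O : Set G} (hO : O ∈ 𝓝 (1 : G)) :
    ∃ H : Subgroup G, H.Normal ∧ IsCompact (H : Set G) ∧ (H : Set G) ⊆ O ∧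
      (𝓝ˢ (H : Set G)).IsCountablyGenerated := by
  obtain ⟨F, hF, hFc, hFle⟩ :=
    hb.exists_isInvariantGroupFilter_le (le_inf (nhds_le_nhdsSet hK1) (le_principal_iff.2 hO))
  have hker : F.ker ⊆ K ∩ O := by
    simpa only [ker_inf, ker_principal, show (𝓝ˢ K).ker = K from nhdsKer_eq_of_t1Space K]
      using ker_mono hFle
  have hFK : F.ker ⊆ K := hker.trans inter_subset_left
  refine ⟨hF.kerSubgroup, hF.kerSubgroup_normal, hK.of_isClosed_subset hF.isClosed_ker hFK,
    hker.trans inter_subset_right, ?_⟩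
  change (𝓝ˢ F.ker).IsCountablyGenerated
  rw [hK.nhdsSet_ker_eq_inf hFK (fun _ => hF.mem_ker_of_clusterPt) hF.nhdsSet_ker_le]
  infer_instance

theorem IsFeathered.exists_isCompact_one_mem (h : IsFeathered G) :
    ∃ K : Set G, IsCompact K ∧ (1 : G) ∈ K ∧ (𝓝ˢ K).IsCountablyGenerated := by
  obtain ⟨K, ⟨k, hk⟩, hK, hKc⟩ := h
  have := hasCountableCharacter_iff.1 hKc
  refine ⟨(k⁻¹ * ·) '' K, hK.image (continuous_const_mul _), ⟨k, hk, inv_mul_cancel k⟩, ?_⟩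
  rw [← (isOpenMap_mul_left k⁻¹).map_nhdsSet_eq (continuous_const_mul _)]
  infer_instance

theorem OmegaBalanced.of_forall_exists_normal_subgroup
    (h : ∀ O : Set G, IsOpen O → (1 : G) ∈ O →
      ∃ H : Subgroup G, H.Normal ∧ (H : Set G) ⊆ O ∧ HasCountableCharacter (H : Set G)) :
    OmegaBalanced G := by
  intro U hU
  obtain ⟨H, hN, hHU, W, hW, hcofinal⟩ :=
    h (interior U) isOpen_interior (mem_interior_iff_mem_nhds.2 hU)
  refine ⟨range W, countable_range W, forall_mem_range.2 fun n => ⟨(hW n).1, (hW n).2 H.one_mem⟩,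
    fun x => ?_⟩
  obtain ⟨n, hn⟩ := hcofinal ((fun g => x * g * x⁻¹) ⁻¹' interior U)
    (isOpen_interior.preimage (by fun_prop)) fun h hh => hHU (hN.conj_mem h hh x)
  exact ⟨W n, mem_range_self n, fun v hv => interior_subset (hn hv)⟩

theorem QuotientGroup.comap_mk_nhds_eq_nhdsSet (H : Subgroup G) (hH : IsCompact (H : Set G)) :
    comap ((↑) : G → G ⧸ H) (𝓝 ((1 : G) : G ⧸ H)) = 𝓝ˢ (H : Set G) := by
  refine le_antisymm ((hasBasis_nhdsSet _).ge_iff.2 fun W ⟨hWo, hHW⟩ => ?_) ?_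
  · obtain ⟨V, hV, hVW⟩ := compact_open_separated_mul_left hH hWo hHW
    exact mem_comap.2 ⟨_, isOpenMap_coe.image_mem_nhds hV,
      (preimage_image_mk_eq_mul H V).trans_subset hVW⟩
  · have hmaps : MapsTo ((↑) : G → G ⧸ H) H {((1 : G) : G ⧸ H)} := fun h hh =>
      mem_singleton_iff.2 (QuotientGroup.eq.2 (by simpa using hh))
    rw [← nhdsSet_singleton]
    exact (continuous_mk.tendsto_nhdsSet hmaps).le_comap

theorem IsTopologicalGroup.metrizableSpace_of_isCountablyGenerated [T0Space G]
    [(𝓝 (1 : G)).IsCountablyGenerated] : MetrizableSpace G := by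
  let := IsTopologicalGroup.rightUniformSpace G
  have : (uniformity G).IsCountablyGenerated := by
    rw [uniformity_eq_comap_nhds_one']
    infer_instance
  exact UniformSpace.metrizableSpace

theorem QuotientGroup.metrizableSpace_iff [T2Space G] (H : Subgroup G) [H.Normal]
    (hH : IsCompact (H : Set G)) :
    MetrizableSpace (G ⧸ H) ↔ (𝓝ˢ (H : Set G)).IsCountablyGenerated := by
  rw [← comap_mk_nhds_eq_nhdsSet H hH]
  refine ⟨fun _ => inferInstance, fun _ => ?_⟩
  have : IsClosed (H : Set G) := hH.isClosed
  have : (𝓝 (1 : G ⧸ H)).IsCountablyGenerated := by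
    rw [← map_comap_of_surjective mk_surjective (𝓝 (1 : G ⧸ H))]
    infer_instance
  exact IsTopologicalGroup.metrizableSpace_of_isCountablyGenerated

end Group

theorem omegaBalanced_and_feathered_iff (G : Type*) [Group G] [TopologicalSpace G] [IsTopologicalGroup G] [T2Space G] :
    (OmegaBalanced G ∧ IsFeathered G) ↔
      ∀ O : Set G, IsOpen O → (1 : G) ∈ O →
        ∃ H : Subgroup G, H.Normal ∧ IsCompact (H : Set G) ∧ (H : Set G) ⊆ O ∧
          MetrizableSpace (G ⧸ H) := by
  constructor
  · rintro ⟨hb, hfeathered⟩ O hO hO1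
    obtain ⟨K, hK, hK1, hKc⟩ := hfeathered.exists_isCompact_one_mem
    obtain ⟨H, hN, hHc, hHO, hHnhds⟩ := hb.exists_normal_compact_subgroup hK hK1 (hO.mem_nhds hO1)
    exact ⟨H, hN, hHc, hHO, (QuotientGroup.metrizableSpace_iff H hHc).2 hHnhds⟩
  · intro h
    have hchar (O : Set G) (hO : IsOpen O) (hO1 : (1 : G) ∈ O) : ∃ H : Subgroup G, H.Normal ∧
        IsCompact (H : Set G) ∧ (H : Set G) ⊆ O ∧ HasCountableCharacter (H : Set G) := by
      obtain ⟨H, hN, hHc, hHO, hm⟩ := h O hO hO1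
      exact ⟨H, hN, hHc, hHO,
        hasCountableCharacter_iff.2 ((QuotientGroup.metrizableSpace_iff H hHc).1 hm)⟩
    refine ⟨.of_forall_exists_normal_subgroup fun O hO hO1 => ?_, ?_⟩
    · obtain ⟨H, hN, -, hHO, hHchar⟩ := hchar O hO hO1
      exact ⟨H, hN, hHO, hHchar⟩
    · obtain ⟨H, -, hHc, -, hHchar⟩ := hchar univ isOpen_univ (mem_univ 1)
      exact ⟨H, ⟨1, H.one_mem⟩, hHc, hHchar⟩
end

section
/- If H is a closed neutral subgroup of a Hausdorff topological group G such that the quotient space G/H is first-countable, then G/H is metrizable. -/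
open Filter Topology Set Pointwise TopologicalSpace

universe u

/-! The sets `{(xH, yH) | x⁻¹ * y ∈ H * U * H}`, for `U` a neighbourhood of `1` in `G`, are a base
of a uniformity on `G ⧸ H`. Neutrality `H * W ⊆ V * H` is what makes this work: it gives
`H * W * H * W ⊆ V * V * H`, which is the triangle inequality, and it shows that the balls
`x * H * W * H` around `xH` shrink to `xH`, so the uniformity induces the quotient topology.
A countable neighbourhood base of the coset `H` in `G ⧸ H` yields a countable base of the uniformity, and
`H` being closed makes `G ⧸ H` a T₁ space; a T₀ uniform space with countably generated uniformity
is metrizable. -/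

open scoped SetRel

theorem Subgroup.coe_mul_coe_mul {G : Type*} [Group G] (H : Subgroup G) (s : Set G) :
    (H : Set G) * (H * s) = H * s := by
  rw [← mul_assoc, coe_mul_coe]

namespace QuotientGroup

open Subgroup (coe_mul_coe_mul)

variable {G : Type*} [Group G] (H : Subgroup G)

def leftEntourage (U : Set G) : SetRel (G ⧸ H) (G ⧸ H) :=
  Prod.map (↑) (↑) '' {p : G × G | p.1⁻¹ * p.2 ∈ U}

variable {H}

theorem mk_mem_leftEntourage_iff {U : Set G} {x y : G} :
    ((x : G ⧸ H), (y : G ⧸ H)) ∈ leftEntourage H U ↔ x⁻¹ * y ∈ (H : Set G) * U * H := by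
  constructor
  · rintro ⟨⟨a, b⟩, hab, hxy⟩
    obtain ⟨hx, hy⟩ := Prod.mk.inj hxy
    rw [QuotientGroup.eq] at hx hy
    exact ⟨x⁻¹ * a * (a⁻¹ * b), ⟨x⁻¹ * a, by simpa using H.inv_mem hx, _, hab, rfl⟩,
      b⁻¹ * y, hy, by group⟩
  · rintro ⟨_, ⟨h₁, hh₁, u, hu, rfl⟩, h₂, hh₂, hxy⟩
    obtain rfl : y = x * (h₁ * u * h₂) := by
      rw [show h₁ * u * h₂ = x⁻¹ * y from hxy, mul_inv_cancel_left]
    refine ⟨(x * h₁, x * (h₁ * u * h₂) * h₂⁻¹), ?_, ?_⟩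
    · show (x * h₁)⁻¹ * (x * (h₁ * u * h₂) * h₂⁻¹) ∈ U
      convert hu using 1
      group
    · simp [mk_mul_of_mem _ hh₁, mk_mul_of_mem _ (H.inv_mem hh₂)]

theorem leftEntourage_mono : Monotone (leftEntourage H) :=
  fun _ _ h => Set.image_mono fun _ hp => h hp

theorem leftEntourage_subset_of_subset_mul_mul {U V : Set G} (h : V ⊆ (H : Set G) * U * H) :
    leftEntourage H V ⊆ leftEntourage H U := by
  rintro ⟨p, q⟩ hpq
  obtain ⟨x, rfl⟩ := mk_surjective p
  obtain ⟨y, rfl⟩ := mk_surjective q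
  rw [mk_mem_leftEntourage_iff] at hpq ⊢
  have : (H : Set G) * V * H ⊆ H * (H * U * H) * H := by gcongr
  simp only [mul_assoc, coe_mul_coe, coe_mul_coe_mul] at this hpq ⊢
  exact this hpq

theorem leftEntourage_inv_subset_swap_preimage (U : Set G) :
    leftEntourage H U⁻¹ ⊆ Prod.swap ⁻¹' leftEntourage H U := by
  rintro _ ⟨⟨a, b⟩, hab, rfl⟩
  exact ⟨(b, a), by simpa using inv_mem_inv.2 hab, rfl⟩

theorem leftEntourage_comp_subset (U V : Set G) :
    leftEntourage H U ○ leftEntourage H V ⊆ leftEntourage H (U * H * V) := by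
  rintro ⟨p, r⟩ ⟨q, hpq, hqr⟩
  obtain ⟨x, rfl⟩ := mk_surjective p
  obtain ⟨y, rfl⟩ := mk_surjective q
  obtain ⟨z, rfl⟩ := mk_surjective r
  rw [mk_mem_leftEntourage_iff] at hpq hqr ⊢
  have h := Set.mul_mem_mul hpq hqr
  simp only [mul_assoc, coe_mul_coe_mul, mul_inv_cancel_left] at h ⊢
  exact h

variable [TopologicalSpace G]

variable (H) in
def leftUniformity : Filter ((G ⧸ H) × (G ⧸ H)) :=
  (𝓝 (1 : G)).lift' (leftEntourage H)

theorem hasBasis_leftUniformity :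
    (leftUniformity H).HasBasis (· ∈ 𝓝 (1 : G)) (leftEntourage H) :=
  (𝓝 (1 : G)).basis_sets.lift' leftEntourage_mono

theorem tendsto_swap_leftUniformity [IsTopologicalGroup G] :
    Tendsto Prod.swap (leftUniformity H) (leftUniformity H) :=
  hasBasis_leftUniformity.tendsto_iff hasBasis_leftUniformity |>.2 fun U hU =>
    ⟨U⁻¹, inv_mem_nhds_one G hU, fun _ hp => leftEntourage_inv_subset_swap_preimage U hp⟩

theorem isCountablyGenerated_leftUniformity [ContinuousMul G]
    [FirstCountableTopology (G ⧸ H)] : IsCountablyGenerated (leftUniformity H) := by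
  obtain ⟨O, hO⟩ := (𝓝 ((1 : G) : G ⧸ H)).exists_antitone_basis
  have hbasis : (leftUniformity H).HasBasis (fun _ : ℕ => True)
      fun n => leftEntourage H (mk ⁻¹' O n) := by
    refine hasBasis_leftUniformity.to_hasBasis (fun U hU => ?_)
      fun n _ => ⟨_, continuous_mk.continuousAt.preimage_mem_nhds (hO.mem n), subset_rfl⟩
    obtain ⟨n, -, hnU⟩ := hO.toHasBasis.mem_iff.1 (isOpenMap_coe.image_mem_nhds hU)
    refine ⟨n, trivial, leftEntourage_subset_of_subset_mul_mul ?_⟩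
    calc mk ⁻¹' O n ⊆ mk ⁻¹' (mk '' U) := preimage_mono hnU
      _ = U * H := preimage_image_mk_eq_mul _ _
      _ ⊆ H * U * H := by rw [mul_assoc]; exact subset_mul_right _ H.one_mem
  exact hbasis.isCountablyGenerated

end QuotientGroup

namespace IsNeutralSubgroup

open QuotientGroup Subgroup

variable {G : Type*} [Group G] [TopologicalSpace G] {H : Subgroup G}

theorem exists_mem_nhds_mul_subset (hn : IsNeutralSubgroup H) {U : Set G} (hU : U ∈ 𝓝 1) :
    ∃ W ∈ 𝓝 (1 : G), (H : Set G) * W ⊆ U * H := by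
  obtain ⟨V, hVU, hV, hV1⟩ := mem_nhds_iff.1 hU
  obtain ⟨W, hW, hW1, hHW⟩ := hn V hV hV1
  exact ⟨W, hW.mem_nhds hW1, hHW.trans (mul_subset_mul_right hVU)⟩

theorem exists_mem_nhds_mul_mul_mul_subset [ContinuousMul G] (hn : IsNeutralSubgroup H)
    {U : Set G} (hU : U ∈ 𝓝 1) : ∃ W ∈ 𝓝 (1 : G), (H : Set G) * W * H * W ⊆ U * H := by
  obtain ⟨V, hV, hV1, hVU⟩ := exists_open_nhds_one_mul_subset hU
  obtain ⟨W, hW, hHW⟩ := hn.exists_mem_nhds_mul_subset (hV.mem_nhds hV1)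
  refine ⟨W, hW, ?_⟩
  calc (H : Set G) * W * H * W = H * W * (H * W) := by simp only [mul_assoc]
    _ ⊆ V * H * (H * W) := by gcongr
    _ = V * (H * W) := by simp only [mul_assoc, coe_mul_coe_mul]
    _ ⊆ V * (V * H) := by gcongr
    _ = V * V * H := (mul_assoc _ _ _).symm
    _ ⊆ U * H := by gcongr

theorem lift'_comp_leftUniformity_le [ContinuousMul G] (hn : IsNeutralSubgroup H) :
    (leftUniformity H).lift' (fun s => s ○ s) ≤ leftUniformity H := by
  intro s hs
  obtain ⟨U, hU, hUs⟩ := hasBasis_leftUniformity.mem_iff.1 hs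
  obtain ⟨W, hW, hWU⟩ := hn.exists_mem_nhds_mul_mul_mul_subset hU
  have hsat : W * H * W ⊆ (H : Set G) * U * H :=
    calc W * H * W ⊆ H * (W * H * W) := subset_mul_right _ H.one_mem
      _ ⊆ U * H := by simpa only [mul_assoc] using hWU
      _ ⊆ H * U * H := by rw [mul_assoc]; exact subset_mul_right _ H.one_mem
  refine mem_of_superset (mem_lift' (hasBasis_leftUniformity.mem_of_mem hW)) ?_
  exact (leftEntourage_comp_subset W W).trans
    ((leftEntourage_subset_of_subset_mul_mul hsat).trans hUs)

theorem nhds_eq_comap_leftUniformity [ContinuousMul G] (hn : IsNeutralSubgroup H)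
    (p : G ⧸ H) : 𝓝 p = comap (Prod.mk p) (leftUniformity H) := by
  obtain ⟨x, rfl⟩ := mk_surjective p
  have hbasis := hasBasis_leftUniformity.comap (Prod.mk (x : G ⧸ H))
  refine le_antisymm (hbasis.ge_iff.2 fun U hU => ?_) (hbasis.le_iff.2 fun N hN => ?_)
  · refine mem_of_superset (isOpenMap_coe.image_mem_nhds (smul_mem_nhds_self.2 hU)) ?_
    rintro _ ⟨_, ⟨u, hu, rfl⟩, rfl⟩
    exact ⟨(x, x • u), by simpa using hu, rfl⟩
  · have hV : (x * ·) ⁻¹' (mk ⁻¹' N) ∈ 𝓝 (1 : G) := by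
      refine (continuous_const_mul x).continuousAt.preimage_mem_nhds ?_
      simpa using continuous_mk.continuousAt.preimage_mem_nhds hN
    obtain ⟨W, hW, hHW⟩ := hn.exists_mem_nhds_mul_subset hV
    refine ⟨W, hW, fun q hq => ?_⟩
    obtain ⟨y, rfl⟩ := mk_surjective q
    obtain ⟨_, ⟨h₁, hh₁, w, hw, rfl⟩, h₂, hh₂, hxy⟩ := mk_mem_leftEntourage_iff.1 hq
    obtain ⟨v, hv, h, hh, hvh⟩ := hHW (mul_mem_mul hh₁ hw)
    have hy : y = x * v * (h * h₂) := by
      rw [← mul_inv_cancel_left x y, ← show h₁ * w * h₂ = x⁻¹ * y from hxy,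
        ← show v * h = h₁ * w from hvh]
      group
    rw [hy, mk_mul_of_mem _ (H.mul_mem hh hh₂)]
    exact hv

abbrev quotientUniformSpace [IsTopologicalGroup G] (hn : IsNeutralSubgroup H) :
    UniformSpace (G ⧸ H) where
  uniformity := leftUniformity H
  symm := tendsto_swap_leftUniformity
  comp := hn.lift'_comp_leftUniformity_le
  nhds_eq_comap_uniformity := hn.nhds_eq_comap_leftUniformity

end IsNeutralSubgroup

theorem quotient_metrizable_of_neutral_general (G : Type*) [Group G] [TopologicalSpace G] [IsTopologicalGroup G] (H : Subgroup G)
    (hcl : IsClosed (H : Set G)) (hn : IsNeutralSubgroup H)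
    (hfc : FirstCountableTopology (G ⧸ H)) :
    MetrizableSpace (G ⧸ H) := by
  let _ := hn.quotientUniformSpace
  have : IsCountablyGenerated (uniformity (G ⧸ H)) :=
    QuotientGroup.isCountablyGenerated_leftUniformity
  have : T1Space (G ⧸ H) := QuotientGroup.t1Space_iff.mpr hcl
  exact UniformSpace.metrizableSpace

theorem quotient_metrizable_of_neutral (G : Type*) [Group G] [TopologicalSpace G] [IsTopologicalGroup G] [T2Space G] (H : Subgroup G)
    (hcl : IsClosed (H : Set G)) (hn : IsNeutralSubgroup H)
    (hfc : FirstCountableTopology (G ⧸ H)) :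
    MetrizableSpace (G ⧸ H) :=
  quotient_metrizable_of_neutral_general G H hcl hn hfc
end

section
/- Let {U_n : n ∈ ω} be a decreasing sequence of open subsets of a topological space X such that ⋂_{n∈ω} U_n = ⋂_{n∈ω} cl(U_n), and put C = ⋂_{n∈ω} U_n. Then the following are equivalent: (1) {U_n : n ∈ ω} is a q-sequence in X, i.e. every sequence (x_n) with x_n ∈ U_n for all n has an accumulation (cluster) point in X; (2) the family {U_n : n ∈ ω} is a base at C in X (every open set containing C contains some U_n) and C is countably compact. -/
open Filter Topology Set Pointwise TopologicalSpace

universe u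

/-!
A cluster point of a sequence that eventually lies in every `U n` lies in every `closure (U n)`,
hence in `C = ⋂ n, U n`. If `{U n}` were not a base at `C`, points `u n ∈ U n` outside a
neighbourhood of `C` would have such a cluster point, which is absurd; sequences in `C` cluster
in `C` for the same reason. Conversely, if `{U n}` is a base at `C`, any sequence `u n ∈ U n`
tends to `𝓝ˢ C`, and a countably generated filter below `𝓝ˢ C` clusters at a point of the
countably compact set `C`.
-/

theorem eventually_mem_of_antitone {X : Type*} {U : ℕ → Set X} (hU : Antitone U) {u : ℕ → X}
    (hu : ∀ n, u n ∈ U n) (n : ℕ) : ∀ᶠ m in atTop, u m ∈ U n :=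
  eventually_atTop.2 ⟨n, fun m hm => hU hm (hu m)⟩

section

variable {X : Type*} [TopologicalSpace X]

theorem isCountablyCompactIn_iff {s : Set X} : IsCountablyCompactIn s ↔ IsCountablyCompact s :=
  isCountablyCompact_iff_countable_open_cover.symm

theorem IsCountablyCompact.exists_clusterPt_of_le_nhdsSet {s : Set X} {f : Filter X} [NeBot f]
    [f.IsCountablyGenerated] (hs : IsCountablyCompact s) (hf : f ≤ 𝓝ˢ s) :
    ∃ a ∈ s, ClusterPt a f := by
  by_contra! h
  obtain ⟨t, ht⟩ := f.exists_antitone_basis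
  have hcover : s ⊆ ⋃ n, (closure (t n))ᶜ := fun a ha => by
    simpa [ht.toHasBasis.clusterPt_iff_forall_mem_closure] using h a ha
  have hmono : Monotone fun n => (closure (t n))ᶜ := fun m n hmn =>
    compl_subset_compl.2 (closure_mono (ht.antitone hmn))
  obtain ⟨N, hN⟩ := hs.elim_directed_cover _ (fun _ => isClosed_closure.isOpen_compl) hcover
    hmono.directed_le
  obtain ⟨x, hxt, hxc⟩ :=
    f.nonempty_of_mem (inter_mem (ht.mem N) (hf (isClosed_closure.isOpen_compl.mem_nhdsSet.2 hN)))
  exact hxc (subset_closure hxt)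

theorem mem_iInter_closure_of_mapClusterPt {ι κ : Type*} {l : Filter ι} {u : ι → X}
    {U : κ → Set X} {p : X} (hp : MapClusterPt p l u) (hu : ∀ n, ∀ᶠ i in l, u i ∈ U n) :
    p ∈ ⋂ n, closure (U n) :=
  mem_iInter.2 fun n =>
    isClosed_closure.mem_of_mapClusterPt hp ((hu n).mono fun _ h => subset_closure h)

variable {U : ℕ → Set X}

theorem exists_subset_of_forall_mapClusterPt (hdec : Antitone U)
    (heq : ⋂ n, U n = ⋂ n, closure (U n))
    (hq : ∀ u : ℕ → X, (∀ n, u n ∈ U n) → ∃ p : X, MapClusterPt p atTop u)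
    {W : Set X} (hW : IsOpen W) (hCW : ⋂ n, U n ⊆ W) : ∃ n, U n ⊆ W := by
  by_contra! h
  choose u hu huW using fun n => not_subset.1 (h n)
  obtain ⟨p, hp⟩ := hq u hu
  have hpC : p ∈ ⋂ n, U n :=
    heq ▸ mem_iInter_closure_of_mapClusterPt hp (eventually_mem_of_antitone hdec hu)
  obtain ⟨m, hm⟩ := (hp.frequently (hW.mem_nhds (hCW hpC))).exists
  exact huW m hm

theorem isCountablyCompact_iInter_of_forall_mapClusterPt (heq : ⋂ n, U n = ⋂ n, closure (U n))
    (hq : ∀ u : ℕ → X, (∀ n, u n ∈ U n) → ∃ p : X, MapClusterPt p atTop u) :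
    IsCountablyCompact (⋂ n, U n) := by
  refine IsCountablyCompact.of_seq_clusterPt fun u hu => ?_
  obtain ⟨N, hN⟩ := eventually_atTop.1 hu
  have hshift : ∀ m n, (u ∘ (· + N)) m ∈ U n := fun m => mem_iInter.1 (hN _ le_add_self)
  obtain ⟨p, hp⟩ := hq _ fun n => hshift n n
  exact ⟨p, heq ▸ mem_iInter_closure_of_mapClusterPt hp fun n => .of_forall fun m => hshift m n,
    hp.of_comp (tendsto_add_atTop_nat N)⟩

theorem exists_mapClusterPt_of_isCountablyCompact (hdec : Antitone U)
    (hbase : ∀ W : Set X, IsOpen W → ⋂ n, U n ⊆ W → ∃ n, U n ⊆ W)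
    (hC : IsCountablyCompact (⋂ n, U n)) {u : ℕ → X} (hu : ∀ n, u n ∈ U n) :
    ∃ p : X, MapClusterPt p atTop u := by
  have hlim : Tendsto u atTop (𝓝ˢ (⋂ n, U n)) := fun W hW => by
    obtain ⟨V, hV, hCV, hVW⟩ := mem_nhdsSet_iff_exists.1 hW
    obtain ⟨n, hn⟩ := hbase V hV hCV
    exact (eventually_mem_of_antitone hdec hu n).mono fun _ hm => hVW (hn hm)
  obtain ⟨p, -, hp⟩ := hC.exists_clusterPt_of_le_nhdsSet hlim
  exact ⟨p, hp⟩

end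

theorem qSequence_iff_base_and_countablyCompact_general {X : Type*} [TopologicalSpace X]
    (U : ℕ → Set X) (hdec : Antitone U)
    (heq : ⋂ n, U n = ⋂ n, closure (U n)) :
    (∀ u : ℕ → X, (∀ n, u n ∈ U n) → ∃ p : X, MapClusterPt p Filter.atTop u) ↔
      ((∀ W : Set X, IsOpen W → (⋂ n, U n) ⊆ W → ∃ n, U n ⊆ W) ∧
        IsCountablyCompactIn (⋂ n, U n)) := by
  rw [isCountablyCompactIn_iff]
  exact ⟨fun hq => ⟨fun _ hW hCW => exists_subset_of_forall_mapClusterPt hdec heq hq hW hCW,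
      isCountablyCompact_iInter_of_forall_mapClusterPt heq hq⟩,
    fun ⟨hbase, hC⟩ _ hu => exists_mapClusterPt_of_isCountablyCompact hdec hbase hC hu⟩

theorem qSequence_iff_base_and_countablyCompact {X : Type*} [TopologicalSpace X]
    (U : ℕ → Set X) (hop : ∀ n, IsOpen (U n)) (hdec : Antitone U)
    (heq : ⋂ n, U n = ⋂ n, closure (U n)) :
    (∀ u : ℕ → X, (∀ n, u n ∈ U n) → ∃ p : X, MapClusterPt p Filter.atTop u) ↔
      ((∀ W : Set X, IsOpen W → (⋂ n, U n) ⊆ W → ∃ n, U n ⊆ W) ∧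
        IsCountablyCompactIn (⋂ n, U n)) :=
  qSequence_iff_base_and_countablyCompact_general U hdec heq
end
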